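/- Consider the WHRT control system with hold strategy. Let t, α ∈ ℕ be such that μ_t = 1 and μ_{t+i} = 0 for all 1 ≤ i ≤ α. Then z_t = (C + D K) x_t + D^w w_t, and for every j with 1 ≤ j ≤ α, z_{t+j} = (C A^j + (C (∑_{i=0}^{j−1} A^i) B + D) K) x_t + ∑_{i=0}^{j−1} C A^{j−1−i} B^w w_{t+i} + D^w w_{t+j}. Consequently the stacked output (z_t, …, z_{t+α}) equals C̃_α x_t + D̃_α K x_t + D̃^w_α (w_t, …, w_{t+α}), where C̃_α = col(C, CA, …, CA^α), D̃_α = col(D, CB + D, …, C (∑_{i=0}^{α−1} A^i) B + D), and D̃^w_α is the block lower-triangular matrix whose (i,j) block (0 ≤ j ≤ i ≤ α) equals D^w if i = j and C A^{i−j−1} B^w if i > j, and is zero above the block diagonal. -/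
import Mathlib


open Matrix

/-- C̃_α = col(C, CA, …, CA^α) -/
noncomputable def liftC {n p : ℕ} (A : Matrix (Fin n) (Fin n) ℝ)
    (C : Matrix (Fin p) (Fin n) ℝ) (α : ℕ) :
    Matrix (Fin (α + 1) × Fin p) (Fin n) ℝ :=
  fun ir c => (C * A ^ (ir.1 : ℕ)) ir.2 c

/-- D̃_α = col(D, CB + D, …, C (∑_{i=0}^{α−1} A^i) B + D)  (hold strategy) -/
noncomputable def liftDhold {n m p : ℕ} (A : Matrix (Fin n) (Fin n) ℝ)
    (B : Matrix (Fin n) (Fin m) ℝ) (C : Matrix (Fin p) (Fin n) ℝ)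
    (D : Matrix (Fin p) (Fin m) ℝ) (α : ℕ) :
    Matrix (Fin (α + 1) × Fin p) (Fin m) ℝ :=
  fun ir c => (C * (∑ i ∈ Finset.range (ir.1 : ℕ), A ^ i) * B + D) ir.2 c

/-- D̃^w_α : block lower-triangular, block (i,j) is D^w if i = j,
C A^{i−j−1} B^w if i > j, and 0 if i < j. -/
noncomputable def liftDw {n q p : ℕ} (A : Matrix (Fin n) (Fin n) ℝ)
    (Bw : Matrix (Fin n) (Fin q) ℝ) (C : Matrix (Fin p) (Fin n) ℝ)
    (Dw : Matrix (Fin p) (Fin q) ℝ) (α : ℕ) :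
    Matrix (Fin (α + 1) × Fin p) (Fin (α + 1) × Fin q) ℝ :=
  fun ir jc =>
    if (ir.1 : ℕ) = (jc.1 : ℕ) then Dw ir.2 jc.2
    else if (jc.1 : ℕ) < (ir.1 : ℕ) then
      (C * A ^ ((ir.1 : ℕ) - (jc.1 : ℕ) - 1) * Bw) ir.2 jc.2
    else 0


private lemma mv_sum {n' m' : ℕ} {ι : Type*} (M : Matrix (Fin m') (Fin n') ℝ)
    (s : Finset ι) (f : ι → Fin n' → ℝ) :
    M.mulVec (∑ i ∈ s, f i) = ∑ i ∈ s, M.mulVec (f i) :=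
  map_sum (Matrix.mulVecLin M) f s

/-- output propagation of the WHRT control system with hold strategy
over a successful control attempt at time t followed by α losses, and the
corresponding stacked (lifted) output formula. -/
theorem stmt9
    (n m q p : ℕ)
    (A : Matrix (Fin n) (Fin n) ℝ) (B : Matrix (Fin n) (Fin m) ℝ)
    (Bw : Matrix (Fin n) (Fin q) ℝ) (C : Matrix (Fin p) (Fin n) ℝ)
    (D : Matrix (Fin p) (Fin m) ℝ) (Dw : Matrix (Fin p) (Fin q) ℝ)
    (K : Matrix (Fin m) (Fin n) ℝ)
    (μ : ℕ → Fin 2)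
    (x : ℕ → Fin n → ℝ) (w : ℕ → Fin q → ℝ) (z : ℕ → Fin p → ℝ)
    (ua : ℕ → Fin m → ℝ) (uinit : Fin m → ℝ)
    -- actuator input: u^a_k = μ_k K x_k + (1 − μ_k) u^a_{k−1}, with u^a_{−1} = uinit
    (hua0 : ua 0 = ((μ 0 : ℕ) : ℝ) • K.mulVec (x 0) + (1 - ((μ 0 : ℕ) : ℝ)) • uinit)
    (hua : ∀ k, ua (k + 1) =
      ((μ (k + 1) : ℕ) : ℝ) • K.mulVec (x (k + 1)) + (1 - ((μ (k + 1) : ℕ) : ℝ)) • ua k)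
    (hdyn : ∀ k, x (k + 1) = A.mulVec (x k) + B.mulVec (ua k) + Bw.mulVec (w k))
    (hout : ∀ k, z k = C.mulVec (x k) + D.mulVec (ua k) + Dw.mulVec (w k))
    (t α : ℕ) (hμt : μ t = 1) (hμ0 : ∀ i, 1 ≤ i → i ≤ α → μ (t + i) = 0) :
    z t = (C + D * K).mulVec (x t) + Dw.mulVec (w t) ∧
    (∀ j, 1 ≤ j → j ≤ α →
      z (t + j) =
        (C * A ^ j + (C * (∑ i ∈ Finset.range j, A ^ i) * B + D) * K).mulVec (x t) +
        ∑ i ∈ Finset.range j, (C * A ^ (j - 1 - i) * Bw).mulVec (w (t + i)) +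
        Dw.mulVec (w (t + j))) ∧
    (fun ir : Fin (α + 1) × Fin p => z (t + (ir.1 : ℕ)) ir.2) =
      (liftC A C α).mulVec (x t) + (liftDhold A B C D α).mulVec (K.mulVec (x t)) +
      (liftDw A Bw C Dw α).mulVec (fun jc : Fin (α + 1) × Fin q => w (t + (jc.1 : ℕ)) jc.2) := by
  -- held input equals K x_t throughout
  have hK : ∀ j, j ≤ α → ua (t + j) = K.mulVec (x t) := by
    intro j hj
    induction j with
    | zero =>
      simp only [Nat.add_zero]
      cases t with
      | zero =>
        rw [hua0, hμt]
        norm_num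
      | succ k =>
        rw [hua k, hμt]
        norm_num
    | succ j ih =>
      have h1 : μ (t + (j + 1)) = 0 := hμ0 (j + 1) (by omega) hj
      have ht : t + (j + 1) = (t + j) + 1 := by omega
      rw [ht] at h1 ⊢
      rw [hua, h1, ih (by omega)]
      norm_num
  -- state propagation
  have hX : ∀ j, j ≤ α →
      x (t + j) = (A ^ j).mulVec (x t)
        + ((∑ i ∈ Finset.range j, A ^ i) * B).mulVec (K.mulVec (x t))
        + ∑ i ∈ Finset.range j, (A ^ (j - 1 - i) * Bw).mulVec (w (t + i)) := by
    intro j hj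
    induction j with
    | zero =>
      simp [Matrix.one_mulVec, Matrix.zero_mulVec]
    | succ j ih =>
      have hstep : t + (j + 1) = (t + j) + 1 := by omega
      rw [hstep, hdyn, ih (by omega), hK j (by omega)]
      have eS : ∑ i ∈ Finset.range (j + 1), (A ^ (j + 1 - 1 - i) * Bw).mulVec (w (t + i))
          = ∑ i ∈ Finset.range j, (A * (A ^ (j - 1 - i) * Bw)).mulVec (w (t + i))
            + Bw.mulVec (w (t + j)) := by
        rw [Finset.sum_range_succ]
        congr 1
        · refine Finset.sum_congr rfl fun i hi => ?_
          have hi' : i < j := Finset.mem_range.mp hi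
          have he : j + 1 - 1 - i = (j - 1 - i) + 1 := by omega
          rw [he, pow_succ', Matrix.mul_assoc]
        · simp
      have eM : (∑ i ∈ Finset.range (j + 1), A ^ i) * B
          = A * ((∑ i ∈ Finset.range j, A ^ i) * B) + B := by
        rw [geom_sum_succ, Matrix.add_mul, Matrix.one_mul, Matrix.mul_assoc]
      rw [eS, eM, pow_succ']
      simp only [Matrix.mulVec_add, mv_sum, Matrix.mulVec_mulVec, Matrix.add_mulVec,
        Matrix.add_mul, Matrix.mul_assoc]
      abel
  -- output expression for all 0 ≤ j ≤ α
  have hZ : ∀ j, j ≤ α →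
      z (t + j) = (C * A ^ j).mulVec (x t)
        + (C * (∑ i ∈ Finset.range j, A ^ i) * B + D).mulVec (K.mulVec (x t))
        + ∑ i ∈ Finset.range j, (C * A ^ (j - 1 - i) * Bw).mulVec (w (t + i))
        + Dw.mulVec (w (t + j)) := by
    intro j hj
    rw [hout, hX j hj, hK j hj]
    simp only [Matrix.mulVec_add, mv_sum, Matrix.mulVec_mulVec, Matrix.add_mulVec,
      Matrix.add_mul, Matrix.mul_assoc]
    abel
  refine ⟨?_, ?_, ?_⟩
  · have h0 := hZ 0 (Nat.zero_le α)
    simp only [Nat.add_zero, Finset.range_zero, Finset.sum_empty, pow_zero,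
      Matrix.mul_zero, Matrix.zero_mul, Matrix.mul_one, zero_add, add_zero] at h0
    rw [h0]
    simp only [Matrix.add_mulVec, ← Matrix.mulVec_mulVec]
  · intro j h1 h2
    rw [hZ j h2]
    simp only [Matrix.add_mulVec, ← Matrix.mulVec_mulVec]
  · funext ir
    obtain ⟨i, r⟩ := ir
    have hi : (i : ℕ) ≤ α := by omega
    have hDw : ((liftDw A Bw C Dw α).mulVec
          (fun jc : Fin (α + 1) × Fin q => w (t + (jc.1 : ℕ)) jc.2)) (i, r)
        = ∑ k ∈ Finset.range (i : ℕ), ((C * A ^ ((i : ℕ) - 1 - k) * Bw).mulVec (w (t + k))) r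
          + (Dw.mulVec (w (t + (i : ℕ)))) r := by
      have expand : ((liftDw A Bw C Dw α).mulVec
            (fun jc : Fin (α + 1) × Fin q => w (t + (jc.1 : ℕ)) jc.2)) (i, r)
          = ∑ j : Fin (α + 1),
              (if (i : ℕ) = (j : ℕ) then (Dw.mulVec (w (t + (j : ℕ)))) r
               else if (j : ℕ) < (i : ℕ) then
                 ((C * A ^ ((i : ℕ) - 1 - (j : ℕ)) * Bw).mulVec (w (t + (j : ℕ)))) r
               else 0) := by
        simp only [Matrix.mulVec, dotProduct, liftDw, Fintype.sum_prod_type]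
        refine Finset.sum_congr rfl fun j _ => ?_
        by_cases h1 : (i : ℕ) = (j : ℕ)
        · simp [h1]
        · by_cases h2 : (j : ℕ) < (i : ℕ)
          · have he : (i : ℕ) - (j : ℕ) - 1 = (i : ℕ) - 1 - (j : ℕ) := by omega
            simp [h1, h2, he]
          · simp [h1, h2]
      rw [expand, Fin.sum_univ_eq_sum_range
        (fun k => if (i : ℕ) = k then (Dw.mulVec (w (t + k))) r
          else if k < (i : ℕ) then
            ((C * A ^ ((i : ℕ) - 1 - k) * Bw).mulVec (w (t + k))) r
          else 0) (α + 1)]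
      rw [← Finset.sum_subset (Finset.range_subset_range.mpr (show (i : ℕ) + 1 ≤ α + 1 by omega))
        (fun k hk hk' => by
          simp only [Finset.mem_range] at hk hk'
          have h1 : ¬ ((i : ℕ) = k) := by omega
          have h2 : ¬ (k < (i : ℕ)) := by omega
          rw [if_neg h1, if_neg h2])]
      rw [Finset.sum_range_succ, if_pos rfl]
      congr 1
      refine Finset.sum_congr rfl fun k hk => ?_
      have hk' : k < (i : ℕ) := Finset.mem_range.mp hk
      rw [if_neg (by omega), if_pos hk']
    rw [hZ (i : ℕ) hi]
    simp only [Pi.add_apply, Finset.sum_apply]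
    rw [show ((liftC A C α).mulVec (x t)) (i, r)
        = ((C * A ^ (i : ℕ)).mulVec (x t)) r from rfl,
      show ((liftDhold A B C D α).mulVec (K.mulVec (x t))) (i, r)
        = ((C * (∑ k ∈ Finset.range (i : ℕ), A ^ k) * B + D).mulVec (K.mulVec (x t))) r
        from rfl,
      hDw]
    abel
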